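/- The syndrome map identifies cosets of C^(m) with vectors of even weight in F_2^m: for every vector x ∈ F_2^n, the syndrome H_m x^T is a vector of even Hamming weight in F_2^m, and every even-weight vector of F_2^m arises as a syndrome; the weight of the coset x + C^(m) (minimum weight of its elements) equals half the Hamming weight of its syndrome. -/

import Mathlib

open Finset

/-- Coordinate positions of `C^(m)`: the 2-element subsets of `{1,…,m}`. -/
abbrev Coords (m : ℕ) := {s : Finset (Fin m) // s.card = 2}

/-- The parity check matrix `H_m`, whose columns are all weight-2 vectors of length `m`. -/
def Hmat (m : ℕ) (i : Fin m) (c : Coords m) : ZMod 2 := if i ∈ c.1 then 1 else 0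

/-- The code `C^(m)`: the kernel of `H_m` over `F_2`. -/
noncomputable def Cm (m : ℕ) : Submodule (ZMod 2) (Coords m → ZMod 2) :=
  LinearMap.ker (Matrix.mulVecLin (Matrix.of fun i c => Hmat m i c))

/-- The distance from a vector `x` to a code `C`. -/
noncomputable def distToCode {ι : Type*} [Fintype ι]
    (C : Set (ι → ZMod 2)) (x : ι → ZMod 2) : ℕ :=
  sInf {d | ∃ c ∈ C, hammingDist x c = d}

/-- The covering radius of a code `C`. -/
noncomputable def covRad {ι : Type*} [Fintype ι] (C : Set (ι → ZMod 2)) : ℕ :=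
  sSup {d | ∃ x, distToCode C x = d}

/-- `C(i)`, the set of vectors at distance exactly `i` from `C`. -/
noncomputable def Cset {ι : Type*} [Fintype ι] (C : Set (ι → ZMod 2)) (i : ℕ) :
    Set (ι → ZMod 2) := {x | distToCode C x = i}

/-- The coset `x + C`. -/
def cosetOf {ι : Type*} (C : Set (ι → ZMod 2)) (x : ι → ZMod 2) : Set (ι → ZMod 2) :=
  (fun c => x + c) '' C

/-- The weight of the coset `x + C`: the minimum Hamming weight of its elements. -/
noncomputable def cosetWt {ι : Type*} [Fintype ι] (C : Set (ι → ZMod 2)) (x : ι → ZMod 2) : ℕ :=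
  sInf {w | ∃ v ∈ cosetOf C x, hammingNorm v = w}

/-- Complete regularity of a code `C` with covering radius `ρ` and
intersection numbers `b i`, `c i`. -/
noncomputable def compRegular {ι : Type*} [Fintype ι] (C : Set (ι → ZMod 2)) (ρ : ℕ)
    (b c : ℕ → ℕ) : Prop :=
  (∀ i, 1 ≤ i → i ≤ ρ → ∀ x ∈ Cset C i,
      Nat.card {y | hammingDist x y = 1 ∧ y ∈ Cset C (i - 1)} = c i) ∧
  (∀ i, i < ρ → ∀ x ∈ Cset C i,
      Nat.card {y | hammingDist x y = 1 ∧ y ∈ Cset C (i + 1)} = b i)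

/-- The action of a coordinate permutation on vectors. -/
def permAct {ι : Type*} (π : Equiv.Perm ι) (v : ι → ZMod 2) : ι → ZMod 2 := v ∘ π

/-- The automorphism group of a code, as a set of coordinate permutations. -/
def autSet {ι : Type*} (C : Set (ι → ZMod 2)) : Set (Equiv.Perm ι) :=
  {π | ∀ v, permAct π v ∈ C ↔ v ∈ C}

/-- Complete transitivity: any two cosets of the same weight are related by
an automorphism of the code. -/
noncomputable def compTrans {ι : Type*} [Fintype ι] (C : Set (ι → ZMod 2)) : Prop :=
  ∀ x x', distToCode C x = distToCode C x' →
    ∃ π ∈ autSet C, permAct π '' cosetOf C x = cosetOf C x'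

/-- The syndrome of a vector with respect to H_m. -/
noncomputable def synd (m : ℕ) (x : Coords m → ZMod 2) : Fin m → ZMod 2 :=
  Matrix.mulVecLin (Matrix.of fun i c => Hmat m i c) x

/-!
Every column of `H_m` has weight two, so the coordinates of a syndrome sum to zero over `F_2`:
syndromes have even weight. A vector `v` of weight `w` has a syndrome of weight at most `2w`,
since its support consists of `w` pairs. Conversely, partitioning the support of an even-weight
`s` into pairs `{a, b}`, which are themselves coordinates of `C^(m)`, produces a vector of weight
`wt(s) / 2` with syndrome `s`. As the coset `x + C^(m)` consists of the vectors with the syndrome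
of `x`, its weight is exactly half the weight of that syndrome.
-/

section HammingNorm

variable {ι : Type*} [Fintype ι]

lemma hammingNorm_add_le [DecidableEq ι] {β : ι → Type*} [∀ i, AddZeroClass (β i)]
    [∀ i, DecidableEq (β i)] (x y : ∀ i, β i) :
    hammingNorm (x + y) ≤ hammingNorm x + hammingNorm y := by
  refine (card_le_card fun i hi => ?_).trans (card_union_le _ _)
  by_contra h
  simp_all

lemma hammingNorm_single {β : ι → Type*} [DecidableEq ι] [∀ i, Zero (β i)]
    [∀ i, DecidableEq (β i)] (i : ι) {b : β i} (hb : b ≠ 0) :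
    hammingNorm (Pi.single i b) = 1 := by
  rw [hammingNorm, card_eq_one]
  exact ⟨i, by ext j; by_cases h : j = i <;> simp_all⟩

lemma ZMod.eq_one_of_ne_zero_two {z : ZMod 2} (h : z ≠ 0) : z = 1 := by
  revert z; decide

lemma indicator_filter_ne_zero (s : ι → ZMod 2) :
    ((univ.filter (s · ≠ 0) : Finset ι) : Set ι).indicator 1 = s := by
  ext i
  by_cases h : s i = 0 <;> simp [h, ZMod.eq_one_of_ne_zero_two]

lemma natCast_hammingNorm_eq_sum (s : ι → ZMod 2) : (hammingNorm s : ZMod 2) = ∑ i, s i := by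
  conv_rhs => rw [← indicator_filter_ne_zero s]
  rw [hammingNorm, ← sum_boole]
  simp [Set.indicator_apply]

lemma even_hammingNorm_iff_sum_eq_zero (s : ι → ZMod 2) :
    Even (hammingNorm s) ↔ ∑ i, s i = 0 := by
  rw [← ZMod.natCast_eq_zero_iff_even, natCast_hammingNorm_eq_sum]

end HammingNorm

lemma cosetOf_ker {ι M : Type*} [AddCommGroup M] [Module (ZMod 2) M]
    (f : (ι → ZMod 2) →ₗ[ZMod 2] M) (x : ι → ZMod 2) :
    cosetOf (LinearMap.ker f : Set (ι → ZMod 2)) x = f ⁻¹' {f x} := by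
  ext v
  constructor
  · rintro ⟨c, hc, rfl⟩
    simp_all
  · intro hv
    exact ⟨v - x, by simp_all, add_sub_cancel x v⟩

section Syndrome

variable {m : ℕ}

lemma synd_apply (x : Coords m → ZMod 2) (i : Fin m) :
    synd m x i = ∑ c, Hmat m i c * x c := by
  simp [synd, Matrix.mulVec, dotProduct]

lemma synd_add (x y : Coords m → ZMod 2) : synd m (x + y) = synd m x + synd m y :=
  map_add _ x y

lemma cosetOf_Cm (x : Coords m → ZMod 2) :
    cosetOf (Cm m : Set (Coords m → ZMod 2)) x = synd m ⁻¹' {synd m x} :=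
  cosetOf_ker _ x

lemma synd_single (c : Coords m) :
    synd m (Pi.single c 1) = (c.1 : Set (Fin m)).indicator 1 := by
  ext i
  simp [synd_apply, Hmat, Set.indicator_apply, Pi.single_apply]

lemma sum_synd_eq_zero (x : Coords m → ZMod 2) : ∑ i, synd m x i = 0 := by
  have column_sum (c : Coords m) : ∑ i, Hmat m i c = 0 := by
    simp only [Hmat, sum_ite_mem, univ_inter, sum_const, c.2, nsmul_eq_mul, Nat.cast_ofNat,
      mul_one]
    rfl
  simp_rw [synd_apply, sum_comm (γ := Fin m), ← sum_mul, column_sum, zero_mul, sum_const_zero]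

lemma even_hammingNorm_synd (x : Coords m → ZMod 2) : Even (hammingNorm (synd m x)) :=
  (even_hammingNorm_iff_sum_eq_zero _).2 (sum_synd_eq_zero x)

lemma hammingNorm_synd_le (v : Coords m → ZMod 2) :
    hammingNorm (synd m v) ≤ 2 * hammingNorm v := by
  have support_subset :
      univ.filter (synd m v · ≠ 0) ⊆ (univ.filter (v · ≠ 0)).biUnion (·.1) := by
    intro i hi
    by_contra h
    refine (mem_filter.1 hi).2 ((synd_apply v i).trans (sum_eq_zero fun c _ => ?_))
    by_cases hc : v c = 0
    · simp [hc]
    · have hic : i ∉ c.1 := fun hic => h (mem_biUnion.2 ⟨c, by simpa using hc, hic⟩)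
      simp [Hmat, hic]
  calc hammingNorm (synd m v) ≤ ∑ c ∈ univ.filter (v · ≠ 0), c.1.card :=
        (card_le_card support_subset).trans card_biUnion_le
    _ = 2 * hammingNorm v := by
        rw [sum_congr rfl fun c _ => c.2, sum_const, smul_eq_mul, mul_comm]
        rfl

lemma exists_synd_eq_indicator (S : Finset (Fin m)) (hS : Even S.card) :
    ∃ v, synd m v = (S : Set (Fin m)).indicator 1 ∧ 2 * hammingNorm v ≤ S.card := by
  induction S using Finset.strongInduction with
  | H S ih =>
  rcases S.eq_empty_or_nonempty with rfl | hne
  · exact ⟨0, by ext; simp [synd_apply], by simp⟩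
  obtain ⟨a, ha, b, hb, hab⟩ : ∃ a ∈ S, ∃ b ∈ S, a ≠ b := by
    rw [← one_lt_card]
    obtain ⟨k, hk⟩ := hS
    have := hne.card_pos
    omega
  have hpair : ({a, b} : Finset (Fin m)) ⊆ S := by simp [insert_subset_iff, ha, hb]
  have hcard : (S \ {a, b}).card + 2 = S.card := by
    rw [card_sdiff_of_subset hpair, ← card_pair hab, Nat.sub_add_cancel (card_le_card hpair)]
  obtain ⟨v, hv, hvS⟩ := ih (S \ {a, b}) (sdiff_ssubset hpair (by simp))
    (by rw [← hcard] at hS; exact (Nat.even_add.1 hS).2 even_two)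
  refine ⟨v + Pi.single ⟨{a, b}, card_pair hab⟩ 1, ?_, ?_⟩
  · rw [synd_add, hv, synd_single, coe_sdiff, Set.indicator_sdiff (coe_subset.2 hpair),
      sub_add_cancel]
  · calc 2 * hammingNorm (v + Pi.single ⟨{a, b}, card_pair hab⟩ 1)
        ≤ 2 * (hammingNorm v + 1) := by
          grw [hammingNorm_add_le, hammingNorm_single _ one_ne_zero]
      _ ≤ S.card := by omega

lemma exists_synd_eq_of_even {s : Fin m → ZMod 2} (hs : Even (hammingNorm s)) :
    ∃ v, synd m v = s ∧ 2 * hammingNorm v ≤ hammingNorm s := by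
  obtain ⟨v, hv, hvs⟩ := exists_synd_eq_indicator _ hs
  exact ⟨v, by rwa [indicator_filter_ne_zero] at hv, hvs⟩

lemma cosetWt_Cm (x : Coords m → ZMod 2) :
    cosetWt (Cm m : Set (Coords m → ZMod 2)) x = hammingNorm (synd m x) / 2 := by
  have lower (v : Coords m → ZMod 2) (hv : synd m v = synd m x) :
      hammingNorm (synd m x) / 2 ≤ hammingNorm v := by
    have := hammingNorm_synd_le v
    rw [hv] at this
    omega
  obtain ⟨v, hv, hvx⟩ := exists_synd_eq_of_even (even_hammingNorm_synd x)
  refine IsLeast.csInf_eq ⟨⟨v, by simp [cosetOf_Cm, hv], ?_⟩, ?_⟩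
  · have := lower v hv
    omega
  · rintro _ ⟨u, hu, rfl⟩
    rw [cosetOf_Cm] at hu
    exact lower u hu

end Syndrome

theorem stmt_7_general (m : ℕ) :
    (∀ x : Coords m → ZMod 2, Even (hammingNorm (synd m x))) ∧
    (∀ s : Fin m → ZMod 2, Even (hammingNorm s) → ∃ x, synd m x = s) ∧
    (∀ x : Coords m → ZMod 2,
      cosetWt (Cm m : Set (Coords m → ZMod 2)) x = hammingNorm (synd m x) / 2) :=
  ⟨even_hammingNorm_synd, fun _ hs => (exists_synd_eq_of_even hs).imp fun _ => And.left,
    cosetWt_Cm⟩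

/-- syndromes of C^(m) are exactly the even-weight vectors of F_2^m,
and the weight of a coset is half the weight of its syndrome. -/
theorem stmt_7 (m : ℕ) (hm : 3 ≤ m) :
    (∀ x : Coords m → ZMod 2, Even (hammingNorm (synd m x))) ∧
    (∀ s : Fin m → ZMod 2, Even (hammingNorm s) → ∃ x, synd m x = s) ∧
    (∀ x : Coords m → ZMod 2,
      cosetWt (Cm m : Set (Coords m → ZMod 2)) x = hammingNorm (synd m x) / 2) :=
  stmt_7_general m
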